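/- arXiv:2211.08391 — 2 statements merged into one kernel-verified Lean document; each statement's English description precedes it below -/
import Mathlib

section
/- Let A be a commutative Noetherian ring and let I, J, K be ideals of A. Then the integral closures satisfy \overline{\overline{IJ}\,K} = \overline{IJK} = \overline{I\,\overline{JK}}. In particular the operation I*J = \overline{IJ} on ideals of A is associative. -/
open Polynomial

set_option synthInstance.maxHeartbeats 1000000
set_option maxHeartbeats 1000000


/-- `x` satisfies an equation of integral dependence over the ideal `I`:
`x ^ n + a 1 * x ^ (n-1) + ⋯ + a (n-1) * x + a n = 0` with `a i ∈ I ^ i`. -/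
def IsIntegralOverIdeal {A : Type*} [CommRing A] (I : Ideal A) (x : A) : Prop :=
  ∃ n : ℕ, 0 < n ∧ ∃ a : ℕ → A, (∀ i, 1 ≤ i → i ≤ n → a i ∈ I ^ i) ∧
    x ^ n + ∑ i ∈ Finset.Icc 1 n, a i * x ^ (n - i) = 0

/-- The integral closure `\overline{I}` of an ideal `I`.  The set of elements integral
over `I` is in fact an ideal, so taking the ideal span of this set does not change it. -/
def intCl {A : Type*} [CommRing A] (I : Ideal A) : Ideal A :=
  Ideal.span {x | IsIntegralOverIdeal I x}

section Aux

variable {A : Type*} [CommRing A]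

/-- transport the integral equation to `A[X]` at the monomial level -/
lemma eval_monomial_eq (x : A) (n : ℕ) (a : ℕ → A)
    (heq : x ^ n + ∑ i ∈ Finset.Icc 1 n, a i * x ^ (n - i) = 0) :
    (monomial 1 x : A[X]) ^ n
      + ∑ i ∈ Finset.Icc 1 n, monomial i (a i) * (monomial 1 x : A[X]) ^ (n - i) = 0 := by
  have h1 : ∀ k : ℕ, (monomial 1 x : A[X]) ^ k = monomial k (x ^ k) := by
    intro k; rw [monomial_pow, one_mul]
  rw [h1]
  have h2 : ∀ i ∈ Finset.Icc 1 n,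
      monomial i (a i) * (monomial 1 x : A[X]) ^ (n - i) = monomial n (a i * x ^ (n - i)) := by
    intro i hi
    rw [Finset.mem_Icc] at hi
    have hin : i + (n - i) = n := by omega
    rw [h1, monomial_mul_monomial, hin]
  rw [Finset.sum_congr rfl h2, ← map_sum (monomial n) _ _, ← map_add, heq, map_zero]

lemma monic_aux {R : Type*} [CommRing R] {n : ℕ} (hn : 0 < n) (c : ℕ → R) :
    (X ^ n + ∑ i ∈ Finset.Icc 1 n, C (c i) * X ^ (n - i)).Monic := by
  apply monic_X_pow_add
  apply lt_of_le_of_lt (degree_sum_le _ _)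
  rw [Finset.sup_lt_iff (by exact_mod_cast WithBot.bot_lt_coe n)]
  intro i hi
  rw [Finset.mem_Icc] at hi
  refine lt_of_le_of_lt (degree_C_mul_X_pow_le _ _) ?_
  exact_mod_cast Nat.sub_lt hn hi.1

lemma isIntegral_of (I : Ideal A) {x : A} (hx : IsIntegralOverIdeal I x) :
    IsIntegral (reesAlgebra I) (monomial 1 x : A[X]) := by
  obtain ⟨n, hn, a, ha, heq⟩ := hx
  classical
  set c : ℕ → reesAlgebra I := fun i =>
    if h : 1 ≤ i ∧ i ≤ n then ⟨monomial i (a i), reesAlgebra.monomial_mem.2 (ha i h.1 h.2)⟩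
    else 0 with hc
  refine ⟨X ^ n + ∑ i ∈ Finset.Icc 1 n, C (c i) * X ^ (n - i), monic_aux hn c, ?_⟩
  rw [← aeval_def, map_add, map_pow, aeval_X, map_sum]
  have h3 : ∀ i ∈ Finset.Icc 1 n, (aeval (monomial 1 x : A[X])) (C (c i) * X ^ (n - i))
      = monomial i (a i) * (monomial 1 x : A[X]) ^ (n - i) := by
    intro i hi
    rw [Finset.mem_Icc] at hi
    rw [map_mul, map_pow, aeval_X, aeval_C]
    congr 1
    show ((c i : A[X])) = _
    rw [hc]
    simp [dif_pos (And.intro hi.1 hi.2)]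
  rw [Finset.sum_congr rfl h3]
  exact eval_monomial_eq x n a heq

lemma isIntegralOverIdeal_of (I : Ideal A) {x : A}
    (hx : IsIntegral (reesAlgebra I) (monomial 1 x : A[X])) : IsIntegralOverIdeal I x := by
  obtain ⟨p, pm, hp⟩ := hx
  set q : (↥(reesAlgebra I))[X] := p * X with hqdef
  have qm : q.Monic := pm.mul monic_X
  have hq : (aeval (monomial 1 x : A[X])) q = 0 := by
    rw [hqdef, map_mul, aeval_X, ← aeval_def] at *
    rw [hp, zero_mul]
  set n := q.natDegree with hn
  by_cases hn0 : n = 0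
  · -- degenerate: q = 1, so A is trivial
    have hq1 : q = 1 := by
      have h0 : q = C (q.coeff 0) := Polynomial.eq_C_of_natDegree_eq_zero hn0
      have h1 : q.coeff 0 = 1 := by
        have := qm.coeff_natDegree
        rwa [← hn, hn0] at this
      rw [h0, h1, map_one]
    rw [hq1, map_one] at hq
    have h01 : (1 : A) = 0 := by
      have := congrArg (fun r : A[X] => r.coeff 0) hq
      simpa using this
    refine ⟨1, one_pos, 0, fun i _ _ => Submodule.zero_mem _, ?_⟩
    have : ∀ y : A, y = 0 := fun y => by
      calc y = y * 1 := (mul_one y).symm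
      _ = y * 0 := by rw [h01]
      _ = 0 := mul_zero y
    rw [this (_ + _)]
  · -- main case
    have hn1 : 1 ≤ n := Nat.one_le_iff_ne_zero.2 hn0
    have hsum : (0 : A[X]) = ∑ j ∈ Finset.range (n + 1),
        ((q.coeff j : A[X])) * (monomial 1 x : A[X]) ^ j := by
      rw [← hq, aeval_eq_sum_range]
      rw [← hn]
      refine Finset.sum_congr rfl fun j _ => ?_
      rfl
    have hcoeff : (0 : A) = ∑ j ∈ Finset.range (n + 1),
        ((q.coeff j : A[X])).coeff (n - j) * x ^ j := by
      have := congrArg (fun r : A[X] => r.coeff n) hsum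
      simp only [Polynomial.coeff_zero, Polynomial.finset_sum_coeff] at this
      rw [this]
      refine Finset.sum_congr rfl fun j hj => ?_
      rw [Finset.mem_range] at hj
      have hjn : j ≤ n := Nat.lt_succ_iff.mp hj
      have h1 : (monomial 1 x : A[X]) ^ j = monomial j (x ^ j) := by
        rw [monomial_pow, one_mul]
      have h2 : n = (n - j) + j := by omega
      rw [h1]
      conv_lhs => rw [h2]
      exact Polynomial.coeff_mul_monomial _ _ _ _
    refine ⟨n, hn1, fun i => ((q.coeff (n - i) : A[X])).coeff i, fun i h1i hin => ?_, ?_⟩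
    · exact (q.coeff (n - i)).2 i
    · -- reindex
      have hlast : ((q.coeff n : A[X])).coeff 0 * x ^ n = x ^ n := by
        have h1 : q.coeff n = 1 := by rw [hn]; exact qm.coeff_natDegree
        rw [h1]
        show ((1 : reesAlgebra I) : A[X]).coeff 0 * x ^ n = x ^ n
        simp
      rw [Finset.sum_range_succ, Nat.sub_self, hlast] at hcoeff
      have hbij : ∑ i ∈ Finset.Icc 1 n, ((q.coeff (n - i) : A[X])).coeff i * x ^ (n - i)
          = ∑ j ∈ Finset.range n, ((q.coeff j : A[X])).coeff (n - j) * x ^ j := by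
        refine Finset.sum_nbij' (fun i => n - i) (fun j => n - j) ?_ ?_ ?_ ?_ ?_
        · intro i hi; rw [Finset.mem_Icc] at hi; simp only [Finset.mem_range]; omega
        · intro j hj; rw [Finset.mem_range] at hj; simp only [Finset.mem_Icc]; omega
        · intro i hi; rw [Finset.mem_Icc] at hi; show n - (n - i) = i; omega
        · intro j hj; rw [Finset.mem_range] at hj; show n - (n - j) = j; omega
        · intro i hi; rw [Finset.mem_Icc] at hi
          have h2 : n - (n - i) = i := by omega
          simp only [h2]
      rw [hbij, add_comm]
      exact hcoeff.symm

/-- generic version: integrality over any base whose image provides the monomials -/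
lemma isIntegral_of_equation {R₀ : Type*} [CommRing R₀] [Algebra R₀ A[X]] {x : A} {n : ℕ}
    (hn : 0 < n) (c : ℕ → R₀) (a : ℕ → A)
    (hca : ∀ i, 1 ≤ i → i ≤ n → algebraMap R₀ A[X] (c i) = monomial i (a i))
    (heq : x ^ n + ∑ i ∈ Finset.Icc 1 n, a i * x ^ (n - i) = 0) :
    IsIntegral R₀ (monomial 1 x : A[X]) := by
  refine ⟨X ^ n + ∑ i ∈ Finset.Icc 1 n, C (c i) * X ^ (n - i), monic_aux hn c, ?_⟩
  rw [← aeval_def, map_add, map_pow, aeval_X, map_sum]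
  have h3 : ∀ i ∈ Finset.Icc 1 n, (aeval (monomial 1 x : A[X])) (C (c i) * X ^ (n - i))
      = monomial i (a i) * (monomial 1 x : A[X]) ^ (n - i) := by
    intro i hi
    rw [Finset.mem_Icc] at hi
    rw [map_mul, map_pow, aeval_X, aeval_C, hca i hi.1 hi.2]
  rw [Finset.sum_congr rfl h3]
  exact eval_monomial_eq x n a heq

lemma monomial_mem_closure (I : Ideal A) {x : A} (hx : x ∈ intCl I) :
    (monomial 1 x : A[X]) ∈ integralClosure (reesAlgebra I) A[X] := by
  refine Submodule.span_induction (fun y hy => isIntegral_of I hy) ?_ ?_ ?_ hx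
  · show IsIntegral _ ((monomial 1 : A →ₗ[A] A[X]) 0)
    rw [map_zero]
    exact isIntegral_zero
  · intro y z _ _ hy hz
    show IsIntegral _ ((monomial 1 : A →ₗ[A] A[X]) (y + z))
    rw [map_add]
    exact add_mem hy hz
  · intro r y _ hy
    show IsIntegral _ ((monomial 1 : A →ₗ[A] A[X]) (r • y))
    have : (monomial 1 : A →ₗ[A] A[X]) (r • y) = C r * monomial 1 y := by
      rw [C_mul_monomial]
      simp [smul_eq_mul]
    rw [this]
    have hCr : (C r : A[X]) ∈ integralClosure (reesAlgebra I) A[X] := by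
      have h1 : (C r : A[X]) ∈ reesAlgebra I := (reesAlgebra I).algebraMap_mem r
      exact (integralClosure (reesAlgebra I) A[X]).algebraMap_mem ⟨C r, h1⟩
    exact mul_mem hCr hy

lemma mem_intCl_iff (I : Ideal A) {x : A} : x ∈ intCl I ↔ IsIntegralOverIdeal I x :=
  ⟨fun h => isIntegralOverIdeal_of I (monomial_mem_closure I h), fun h => Ideal.subset_span h⟩

lemma isIntegralOverIdeal_intCl {T : Ideal A} {x : A} (h : IsIntegralOverIdeal (intCl T) x) :
    IsIntegralOverIdeal T x := by
  apply isIntegralOverIdeal_of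
  obtain ⟨n, hn, a, ha, heq⟩ := h
  classical
  set M := integralClosure (reesAlgebra T) A[X] with hM
  have hmono : ∀ (i : ℕ) (c : A), c ∈ (intCl T) ^ i → (monomial i c : A[X]) ∈ M := by
    intro i
    induction i with
    | zero =>
      intro c hc
      have h1 : (monomial 0 c : A[X]) = C c := by simp
      rw [h1]
      exact (integralClosure (reesAlgebra T) A[X]).algebraMap_mem
        ⟨C c, (reesAlgebra T).algebraMap_mem c⟩
    | succ i ih =>
      intro c hc
      rw [pow_succ] at hc
      refine Submodule.mul_induction_on hc ?_ ?_
      · intro b hb y hy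
        have h1 : (monomial (i + 1) (b * y) : A[X]) = monomial i b * monomial 1 y := by
          rw [monomial_mul_monomial]
        rw [h1]
        exact mul_mem (ih b hb) (monomial_mem_closure T hy)
      · intro z w hz hw
        show (monomial (i+1) : A →ₗ[A] A[X]) (z + w) ∈ M
        rw [map_add]
        exact add_mem hz hw
  have hint : IsIntegral (↥M) (monomial 1 x : A[X]) := by
    refine isIntegral_of_equation hn
      (fun i => if h : 1 ≤ i ∧ i ≤ n then ⟨monomial i (a i), hmono i (a i) (ha i h.1 h.2)⟩ else 0)
      a (fun i h1 h2 => ?_) heq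
    simp only [dif_pos (And.intro h1 h2)]
    rfl
  have hidem := integralClosure_idem (R := ↥(reesAlgebra T)) (A := A[X])
  have hmem : (monomial 1 x : A[X]) ∈ integralClosure (↥M) A[X] := hint
  rw [hidem] at hmem
  obtain ⟨y, hy⟩ := Algebra.mem_bot.mp hmem
  have := y.2
  rw [show ((y : A[X])) = monomial 1 x from hy] at this
  exact this

lemma le_intCl (I : Ideal A) : I ≤ intCl I := by
  intro x hx
  apply Ideal.subset_span
  refine ⟨1, one_pos, fun _ => -x, fun i h1 h2 => ?_, by simp⟩
  have : i = 1 := le_antisymm h2 h1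
  rw [this, pow_one]
  exact neg_mem hx

lemma isIntegralOverIdeal_mono {I J : Ideal A} (h : I ≤ J) {x : A}
    (hx : IsIntegralOverIdeal I x) : IsIntegralOverIdeal J x := by
  obtain ⟨n, hn, a, ha, heq⟩ := hx
  exact ⟨n, hn, a, fun i h1 h2 => Ideal.pow_right_mono h i (ha i h1 h2), heq⟩

lemma intCl_mono {I J : Ideal A} (h : I ≤ J) : intCl I ≤ intCl J :=
  Ideal.span_mono fun x hx => isIntegralOverIdeal_mono h hx

lemma intCl_intCl (I : Ideal A) : intCl (intCl I) ≤ intCl I := fun x hx =>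
  (mem_intCl_iff I).2 (isIntegralOverIdeal_intCl ((mem_intCl_iff (intCl I)).1 hx))

lemma isIntegralOverIdeal_mul {L R : Ideal A} {y r : A}
    (hy : IsIntegralOverIdeal L y) (hr : r ∈ R) : IsIntegralOverIdeal (L * R) (y * r) := by
  obtain ⟨n, hn, a, ha, heq⟩ := hy
  refine ⟨n, hn, fun i => a i * r ^ i, fun i h1 h2 => ?_, ?_⟩
  · rw [mul_pow]
    exact Ideal.mul_mem_mul (ha i h1 h2) (Ideal.pow_mem_pow hr i)
  · have h3 : ∀ i ∈ Finset.Icc 1 n, a i * r ^ i * (y * r) ^ (n - i)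
        = a i * y ^ (n - i) * r ^ n := by
      intro i hi
      rw [Finset.mem_Icc] at hi
      have h4 : i + (n - i) = n := by omega
      calc a i * r ^ i * (y * r) ^ (n - i) = a i * y ^ (n - i) * (r ^ i * r ^ (n - i)) := by
            rw [mul_pow]; ring
        _ = a i * y ^ (n - i) * r ^ n := by rw [← pow_add, h4]
    rw [Finset.sum_congr rfl h3, ← Finset.sum_mul, mul_pow, ← add_mul, heq, zero_mul]

end Aux

/-- In a commutative Noetherian ring, integral closure of products is associative:
the closure of `(intCl (I*J)) * K`, of `I*J*K`, and of `I * intCl (J*K)` all agree. -/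
theorem star_assoc {A : Type*} [CommRing A] [IsNoetherianRing A] (I J K : Ideal A) :
    intCl (intCl (I * J) * K) = intCl (I * J * K) ∧
      intCl (I * J * K) = intCl (I * intCl (J * K)) := by
  constructor
  · apply le_antisymm
    · refine le_trans (intCl_mono ?_) (intCl_intCl (I * J * K))
      rw [Ideal.mul_le]
      intro y hy k hk
      exact (mem_intCl_iff (I * J * K)).2
        (isIntegralOverIdeal_mul ((mem_intCl_iff (I * J)).1 hy) hk)
    · exact intCl_mono (Ideal.mul_mono_left (le_intCl (I * J)))
  · apply le_antisymm
    · refine intCl_mono ?_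
      rw [mul_assoc]
      exact Ideal.mul_mono_right (le_intCl (J * K))
    · refine le_trans (intCl_mono ?_) (intCl_intCl (I * J * K))
      rw [Ideal.mul_le]
      intro r hr y hy
      rw [mul_assoc, mul_comm r y]
      have := isIntegralOverIdeal_mul ((mem_intCl_iff (J * K)).1 hy) hr
      rw [mul_comm (J * K) I] at this
      exact (mem_intCl_iff (I * (J * K))).2 this
end

section
/- Let A be a commutative Noetherian ring, let I be an ideal of A containing a nonzerodivisor, and let J, K be integrally closed ideals of A. If \overline{IJ} = \overline{IK}, then J = K. That is, the operation I*J = \overline{IJ} is cancellative on integrally closed ideals containing nonzerodivisors. -/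
open Polynomial

lemma Submodule.FG.exists_finset_subset_le_span {R M : Type*} [Semiring R] [AddCommMonoid M]
    [Module R M] {N : Submodule R M} (hN : N.FG) {s : Set M} (h : N ≤ span R s) :
    ∃ t : Finset M, ↑t ⊆ s ∧ N ≤ span R t := by
  classical
  rw [span_eq_iSup_of_singleton_spans, iSup_subtype'] at h
  obtain ⟨u, hu⟩ :=
    CompleteLattice.IsCompactElement.exists_finset_of_le_iSup _ ((fg_iff_compact N).mp hN) _ h
  refine ⟨u.map (Function.Embedding.subtype _), by simp, hu.trans (iSup₂_le fun y hy => ?_)⟩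
  exact span_mono (Set.singleton_subset_iff.mpr (Finset.mem_map_of_mem _ hy))

namespace Ideal

variable {R : Type*} [CommSemiring R]

lemma pow_mul_pow_le_sup_pow (I J : Ideal R) (m n : ℕ) : I ^ m * J ^ n ≤ (I ⊔ J) ^ (m + n) :=
  pow_add (I ⊔ J) m n ▸
    mul_mono (pow_le_pow_left' le_sup_left m) (pow_le_pow_left' le_sup_right n)

lemma sup_pow_add_add_one_le (I J : Ideal R) (m n : ℕ) :
    (I ⊔ J) ^ (m + n + 1) ≤ I ^ (m + 1) * (I ⊔ J) ^ n ⊔ J ^ (n + 1) * (I ⊔ J) ^ m := by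
  rw [← add_eq_sup, add_pow, sum_eq_sup]
  refine Finset.sup_le fun k hk => mul_le_left.trans ?_
  have hk : k ≤ m + n + 1 := Nat.lt_succ_iff.mp (Finset.mem_range.mp hk)
  by_cases hmk : m + 1 ≤ k
  · refine le_sup_of_le_left ?_
    obtain ⟨i, rfl⟩ := Nat.exists_eq_add_of_le hmk
    calc I ^ (m + 1 + i) * J ^ (m + n + 1 - (m + 1 + i))
        = I ^ (m + 1) * (I ^ i * J ^ (m + n + 1 - (m + 1 + i))) := by rw [pow_add, mul_assoc]
      _ ≤ I ^ (m + 1) * (I ⊔ J) ^ n :=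
        mul_mono_right ((pow_mul_pow_le_sup_pow I J _ _).trans_eq (by congr 1; omega))
  · refine le_sup_of_le_right ?_
    calc I ^ k * J ^ (m + n + 1 - k)
        = J ^ (n + 1) * (I ^ k * J ^ (m - k)) := by
          rw [show m + n + 1 - k = n + 1 + (m - k) by omega, pow_add]; ring
      _ ≤ J ^ (n + 1) * (I ⊔ J) ^ m :=
        mul_mono_right ((pow_mul_pow_le_sup_pow I J _ _).trans_eq (by congr 1; omega))

lemma sup_pow_succ_le_mul_pow {L I J : Ideal R} {m n : ℕ} (hI : I ^ (m + 1) ≤ L * I ^ m)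
    (hJ : J ^ (n + 1) ≤ L * (I ⊔ J) ^ n) :
    (I ⊔ J) ^ (m + n + 1) ≤ L * (I ⊔ J) ^ (m + n) := by
  refine (sup_pow_add_add_one_le I J m n).trans (sup_le ?_ ?_)
  · calc I ^ (m + 1) * (I ⊔ J) ^ n ≤ L * I ^ m * (I ⊔ J) ^ n := mul_mono_left hI
      _ ≤ L * (I ⊔ J) ^ m * (I ⊔ J) ^ n :=
        mul_mono_left (mul_mono_right (pow_le_pow_left' le_sup_left m))
      _ = L * (I ⊔ J) ^ (m + n) := by rw [pow_add, mul_assoc]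
  · calc J ^ (n + 1) * (I ⊔ J) ^ m ≤ L * (I ⊔ J) ^ n * (I ⊔ J) ^ m := mul_mono_left hJ
      _ = L * (I ⊔ J) ^ (m + n) := by rw [mul_assoc, ← pow_add, add_comm n]

end Ideal

section

variable {A : Type*} [CommRing A]

lemma isIntegralOverIdeal_of_mem {I : Ideal A} {y : A} (hy : y ∈ I) :
    IsIntegralOverIdeal I y := by
  refine ⟨1, one_pos, fun _ => -y, fun i h1 h2 => ?_, by simp⟩
  obtain rfl : i = 1 := le_antisymm h2 h1
  simpa using I.neg_mem hy

lemma isIntegralOverIdeal_of_monic {J : Ideal A} {x : A} {p : A[X]} (hp : p.Monic)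
    (hcoeff : ∀ k, p.coeff k ∈ J ^ (p.natDegree - k)) (hx : p.eval x = 0) :
    IsIntegralOverIdeal J x := by
  set n := p.natDegree
  rcases Nat.eq_zero_or_pos n with hdeg | hdeg
  · have : Subsingleton A :=
      subsingleton_of_zero_eq_one (by simpa [hp.natDegree_eq_zero.mp hdeg] using hx.symm)
    exact isIntegralOverIdeal_of_mem (Subsingleton.elim 0 x ▸ J.zero_mem)
  refine ⟨n, hdeg, fun i => p.coeff (n - i), fun i _ hi => ?_, ?_⟩
  · simpa [Nat.sub_sub_self hi] using hcoeff (n - i)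
  · have hsum : ∑ i ∈ Finset.Icc 1 n, p.coeff (n - i) * x ^ (n - i)
        = ∑ k ∈ Finset.range n, p.coeff k * x ^ k := by
      rw [← Finset.Ico_add_one_right_eq_Icc,
        Finset.sum_Ico_reflect (fun k => p.coeff k * x ^ k) _ le_rfl, Finset.range_eq_Ico]
      simp
    rw [hsum, ← hx, eval_eq_sum_range, Finset.sum_range_succ, hp.coeff_natDegree, one_mul,
      add_comm]

lemma coeff_mul_X_pow_mem_pow {J : Ideal A} {p : A[X]} (hp : p.Monic)
    (hcoeff : ∀ k, p.coeff k ∈ J ^ (p.natDegree - k)) (m k : ℕ) :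
    (p * X ^ m).coeff k ∈ J ^ ((p * X ^ m).natDegree - k) := by
  nontriviality A
  rw [natDegree_mul_X_pow _ hp.ne_zero, coeff_mul_X_pow']
  split_ifs
  · simpa [show p.natDegree + m - k = p.natDegree - (k - m) by omega] using hcoeff (k - m)
  · exact zero_mem _

lemma IsIntegralOverIdeal.exists_pow_succ_mem_mul_pow {L S : Ideal A} {z : A}
    (hz : IsIntegralOverIdeal L z) (hLS : L ≤ S) (hzS : z ∈ S) :
    ∃ n, z ^ (n + 1) ∈ L * S ^ n := by
  obtain ⟨n, hn, a, ha, heq⟩ := hz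
  obtain ⟨n, rfl⟩ := Nat.exists_eq_add_one_of_ne_zero hn.ne'
  refine ⟨n, ?_⟩
  rw [eq_neg_of_add_eq_zero_left heq]
  refine neg_mem (Submodule.sum_mem _ fun i hi => ?_)
  obtain ⟨hi1, hi2⟩ := Finset.mem_Icc.mp hi
  obtain ⟨i, rfl⟩ := Nat.exists_eq_add_of_le' hi1
  have hai : a (i + 1) ∈ L * S ^ i :=
    Ideal.mul_mono_right (Ideal.pow_right_mono hLS i) (pow_succ' L i ▸ ha _ hi1 hi2)
  have := Ideal.mul_mem_mul hai (Ideal.pow_mem_pow hzS (n + 1 - (i + 1)))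
  rwa [mul_assoc, ← pow_add, show i + (n + 1 - (i + 1)) = n by omega] at this

lemma exists_sup_span_pow_succ_le_mul_pow (L : Ideal A) (Y : Finset A)
    (hY : ∀ y ∈ Y, IsIntegralOverIdeal L y) :
    ∃ d, (L ⊔ Ideal.span Y) ^ (d + 1) ≤ L * (L ⊔ Ideal.span Y) ^ d := by
  classical
  induction Y using Finset.induction_on with
  | empty => exact ⟨0, by simp⟩
  | @insert z Y _ ih =>
    obtain ⟨d, hd⟩ := ih fun y hy => hY y (Finset.mem_insert_of_mem hy)
    have hS : L ⊔ Ideal.span ↑(insert z Y) = (L ⊔ Ideal.span Y) ⊔ Ideal.span {z} := by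
      rw [Finset.coe_insert, Ideal.span_insert]; ac_rfl
    obtain ⟨n, hn⟩ := (hY z (Finset.mem_insert_self z Y)).exists_pow_succ_mem_mul_pow
      (S := L ⊔ Ideal.span ↑(insert z Y)) le_sup_left
      (Ideal.mem_sup_right (Ideal.subset_span (by simp)))
    rw [hS] at hn ⊢
    refine ⟨d + n, Ideal.sup_pow_succ_le_mul_pow hd ?_⟩
    rwa [Ideal.span_singleton_pow, Ideal.span_singleton_le_iff_mem]

lemma exists_monic_coeff_mem_pow_eval_mul_eq_zero {M J : Ideal A} {x : A} (hM : M.FG)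
    (hx : Ideal.span {x} * M ≤ J * M) :
    ∃ p : A[X], p.Monic ∧ (∀ k, p.coeff k ∈ J ^ (p.natDegree - k)) ∧
      ∀ w ∈ M, p.eval x * w = 0 := by
  have : Module.Finite A M := Module.Finite.iff_fg.mpr hM
  let f : Module.End A M := algebraMap A (Module.End A M) x
  have hf : LinearMap.range f ≤ J • ⊤ := by
    rintro _ ⟨w, rfl⟩
    rw [Submodule.mem_smul_top_iff, Ideal.smul_eq_mul]
    exact hx (Ideal.mul_mem_mul (Ideal.mem_span_singleton_self x) w.2)
  obtain ⟨p, hp, -, hcoeff, hpf⟩ :=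
    LinearMap.exists_monic_and_natDegree_eq_and_coeff_mem_pow_and_aeval_eq_zero A f J hf
  refine ⟨p, hp, hcoeff, fun w hw => ?_⟩
  have hpf' : aeval f p = algebraMap A (Module.End A M) (p.eval x) := by
    rw [aeval_algebraMap_apply, coe_aeval_eq_eval]
  simpa [hpf'] using congrArg (fun g : Module.End A M => (g ⟨w, hw⟩ : A)) hpf

lemma isIntegralOverIdeal_of_span_mul_le_intCl [IsNoetherianRing A] {I J : Ideal A} {r x : A}
    (hrI : r ∈ I) (hr : r ∈ nonZeroDivisors A) (hx : Ideal.span {x} * I ≤ intCl (I * J)) :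
    IsIntegralOverIdeal J x := by
  obtain ⟨Y, hYint, hY⟩ :=
    (IsNoetherian.noetherian (Ideal.span {x} * I)).exists_finset_subset_le_span hx
  set T := I * J ⊔ Ideal.span Y
  obtain ⟨d, hd⟩ := exists_sup_span_pow_succ_le_mul_pow (I * J) Y hYint
  have hxT : Ideal.span {x} * I ≤ T := hY.trans le_sup_right
  have hxM : Ideal.span {x} * (I * T ^ d) ≤ J * (I * T ^ d) :=
    calc Ideal.span {x} * (I * T ^ d) = Ideal.span {x} * I * T ^ d := (mul_assoc ..).symm
      _ ≤ T * T ^ d := Ideal.mul_mono_left hxT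
      _ = T ^ (d + 1) := (pow_succ' T d).symm
      _ ≤ I * J * T ^ d := hd
      _ = J * (I * T ^ d) := by ring
  obtain ⟨p, hp, hcoeff, hpM⟩ :=
    exists_monic_coeff_mem_pow_eval_mul_eq_zero (IsNoetherian.noetherian _) hxM
  have hxr : x * r ∈ T := hxT (Ideal.mul_mem_mul (Ideal.mem_span_singleton_self x) hrI)
  have hpx : p.eval x * x ^ d = 0 := by
    refine mem_nonZeroDivisors_iff_right.mp (pow_mem hr (d + 1)) _ ?_
    calc p.eval x * x ^ d * r ^ (d + 1) = p.eval x * (r * (x * r) ^ d) := by ring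
      _ = 0 := hpM _ (Ideal.mul_mem_mul hrI (Ideal.pow_mem_pow hxr d))
  exact isIntegralOverIdeal_of_monic (hp.mul (monic_X_pow d))
    (coeff_mul_X_pow_mem_pow hp hcoeff d) (by simpa using hpx)

lemma le_intCl_of_intCl_mul_le [IsNoetherianRing A] {I J K : Ideal A}
    (hI : ∃ r ∈ I, r ∈ nonZeroDivisors A) (h : intCl (I * J) ≤ intCl (I * K)) :
    J ≤ intCl K := by
  obtain ⟨r, hrI, hr⟩ := hI
  refine fun x hx => Ideal.subset_span (isIntegralOverIdeal_of_span_mul_le_intCl hrI hr ?_)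
  calc Ideal.span {x} * I ≤ J * I :=
        Ideal.mul_mono_left ((Ideal.span_singleton_le_iff_mem _).2 hx)
    _ = I * J := mul_comm J I
    _ ≤ intCl (I * K) := (le_intCl _).trans h

end

/-- Cancellativity: if `I` contains a nonzerodivisor and `J, K` are integrally closed
with `intCl (I*J) = intCl (I*K)`, then `J = K`. -/
theorem star_cancel {A : Type*} [CommRing A] [IsNoetherianRing A] (I J K : Ideal A)
    (hI : ∃ r ∈ I, r ∈ nonZeroDivisors A)
    (hJ : intCl J = J) (hK : intCl K = K)
    (h : intCl (I * J) = intCl (I * K)) : J = K :=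
  le_antisymm (hK ▸ le_intCl_of_intCl_mul_le hI h.le) (hJ ▸ le_intCl_of_intCl_mul_le hI h.ge)
end
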